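/- arXiv:2306.17607 — 4 statements merged into one kernel-verified Lean document; each statement's English description precedes it below -/
import Mathlib

section
/- Let c be an edge-coloring of K_{n,n} = G(U,V), n ≥ 3, with no rainbow K_{1,3}, using k ≥ 4 colors, and suppose every vertex of U sees exactly 2 colors and any two vertices of U have intersecting color sets. If there exist u₁, u₂ ∈ U with C(u₁) = {1,2} and C(u₂) = {1,3}, then for every color i ∈ {4,...,k}, every vertex u ∈ U incident with color i satisfies C(u) = {1, i}, and consequently every vertex v ∈ V sees at most one color different from color 1. -/
open Function Finset SimpleGraph

/-- A rainbow path on 4 vertices `u₁ v₁ u₂ v₂` (middle pattern). -/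
def rbP4pat {N : ℕ} {γ : Type*} (c : Fin N → Fin N → γ) : Prop :=
  ∃ u₁ u₂ v₁ v₂ : Fin N, u₁ ≠ u₂ ∧ v₁ ≠ v₂ ∧
    c u₁ v₁ ≠ c u₂ v₁ ∧ c u₁ v₁ ≠ c u₂ v₂ ∧ c u₂ v₁ ≠ c u₂ v₂

/-- The coloring `c` of `K_{N,N}` contains a rainbow path on 4 vertices. -/
def hasRainbowP4 {N : ℕ} {γ : Type*} (c : Fin N → Fin N → γ) : Prop :=
  rbP4pat c ∨ rbP4pat (fun v u => c u v)

/-- A rainbow path on 5 vertices `u₁ v₁ u₂ v₂ u₃` (one-sided pattern). -/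
def rbP5pat {N : ℕ} {γ : Type*} (c : Fin N → Fin N → γ) : Prop :=
  ∃ u₁ u₂ u₃ v₁ v₂ : Fin N, u₁ ≠ u₂ ∧ u₁ ≠ u₃ ∧ u₂ ≠ u₃ ∧ v₁ ≠ v₂ ∧
    c u₁ v₁ ≠ c u₂ v₁ ∧ c u₁ v₁ ≠ c u₂ v₂ ∧ c u₁ v₁ ≠ c u₃ v₂ ∧
    c u₂ v₁ ≠ c u₂ v₂ ∧ c u₂ v₁ ≠ c u₃ v₂ ∧ c u₂ v₂ ≠ c u₃ v₂

/-- The coloring `c` of `K_{N,N}` contains a rainbow path on 5 vertices. -/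
def hasRainbowP5 {N : ℕ} {γ : Type*} (c : Fin N → Fin N → γ) : Prop :=
  rbP5pat c ∨ rbP5pat (fun v u => c u v)

/-- The coloring `c` of `K_{N,N}` contains a rainbow star `K_{1,3}`:
some vertex (on either side) has three incident edges with pairwise distinct colors. -/
def hasRainbowK13 {N : ℕ} {γ : Type*} (c : Fin N → Fin N → γ) : Prop :=
  (∃ u v₁ v₂ v₃ : Fin N, c u v₁ ≠ c u v₂ ∧ c u v₁ ≠ c u v₃ ∧ c u v₂ ≠ c u v₃) ∨
  (∃ v u₁ u₂ u₃ : Fin N, c u₁ v ≠ c u₂ v ∧ c u₁ v ≠ c u₃ v ∧ c u₂ v ≠ c u₃ v)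

/-- The coloring `c` of `K_{N,N}` (first coordinate: side `U`, second: side `V`)
contains a monochromatic copy of the (bipartite) graph `H`. -/
def hasMonoCopy {N : ℕ} {γ : Type*} {α : Type*} (c : Fin N → Fin N → γ)
    (H : SimpleGraph α) : Prop :=
  ∃ i : γ, ∃ f : α → Fin N ⊕ Fin N, Function.Injective f ∧
    ∀ a b, H.Adj a b → ∃ u v : Fin N, c u v = i ∧
      ((f a = Sum.inl u ∧ f b = Sum.inr v) ∨ (f a = Sum.inr v ∧ f b = Sum.inl u))

/-- The coloring `c` of `K_{N,N}` contains a monochromatic copy of `K_{s,t}`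
(in either orientation with respect to the two sides). -/
def hasMonoKst {N : ℕ} {γ : Type*} (c : Fin N → Fin N → γ) (s t : ℕ) : Prop :=
  ∃ i : γ, ∃ S T : Finset (Fin N),
    ((S.card = s ∧ T.card = t) ∨ (S.card = t ∧ T.card = s)) ∧
    ∀ u ∈ S, ∀ v ∈ T, c u v = i

/-- Disjoint union of a family of graphs, on the sigma type. -/
def sigmaUnion {ι : Type*} {β : ι → Type*} (G : ∀ i, SimpleGraph (β i)) :
    SimpleGraph (Σ i, β i) where
  Adj x y := ∃ i a b, (G i).Adj a b ∧ x = ⟨i, a⟩ ∧ y = ⟨i, b⟩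
  symm := by constructor; rintro x y ⟨i, a, b, h, rfl, rfl⟩; exact ⟨i, b, a, h.symm, rfl, rfl⟩
  loopless := by
    constructor
    rintro x ⟨i, a, b, h, rfl, h2⟩
    obtain rfl : a = b := by simpa using h2
    exact (G i).irrefl h

namespace Finset

variable {α : Type*} [DecidableEq α]

theorem eq_pair_of_card_eq_two {s : Finset α} {a b : α} (hs : #s = 2) (ha : a ∈ s)
    (hb : b ∈ s) (hab : a ≠ b) : s = {a, b} :=
  (eq_of_subset_of_card_le (insert_subset ha (singleton_subset_iff.mpr hb))
    (by rw [hs, card_pair hab])).symm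

theorem eq_pair_of_inter_pair_nonempty {s : Finset α} {a b c i : α} (hs : #s = 2) (hi : i ∈ s)
    (hia : i ≠ a) (hib : i ≠ b) (hic : i ≠ c) (hbc : b ≠ c)
    (hab : (s ∩ {a, b}).Nonempty) (hac : (s ∩ {a, c}).Nonempty) : s = {a, i} := by
  have ha : a ∈ s := by
    -- otherwise `s` contains the three distinct elements `b`, `c`, `i`
    by_contra ha
    obtain ⟨x, hx⟩ := hab
    obtain ⟨y, hy⟩ := hac
    simp only [mem_inter, mem_insert, mem_singleton] at hx hy
    obtain ⟨hxs, rfl | rfl⟩ := hx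
    · exact ha hxs
    obtain ⟨hys, rfl | rfl⟩ := hy
    · exact ha hys
    have : 2 < #s := two_lt_card.mpr ⟨x, hxs, y, hys, i, hi, hbc, hib.symm, hic.symm⟩
    omega
  exact eq_pair_of_card_eq_two hs ha hi hia.symm

end Finset

theorem card_image_col_le_two_of_not_hasRainbowK13 {N : ℕ} {γ : Type*} [DecidableEq γ]
    {c : Fin N → Fin N → γ} (h : ¬ hasRainbowK13 c) (v : Fin N) :
    #(univ.image fun u => c u v) ≤ 2 := by
  by_contra! hcard
  obtain ⟨_, ha, _, hb, _, hc, hab, hac, hbc⟩ := two_lt_card.mp hcard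
  obtain ⟨u₁, -, rfl⟩ := mem_image.mp ha
  obtain ⟨u₂, -, rfl⟩ := mem_image.mp hb
  obtain ⟨u₃, -, rfl⟩ := mem_image.mp hc
  exact h (Or.inr ⟨v, u₁, u₂, u₃, hab, hac, hbc⟩)

theorem mem_image_col_of_image_row_eq_pair {N : ℕ} {γ : Type*} [DecidableEq γ]
    {c : Fin N → Fin N → γ} {u v : Fin N} {x j : γ}
    (hu : univ.image (fun v => c u v) = {x, j}) (hx : x ∉ univ.image fun u => c u v) :
    j ∈ univ.image fun u => c u v := by
  have huv : c u v ∈ ({x, j} : Finset γ) := hu ▸ mem_image_of_mem _ (mem_univ v)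
  rcases mem_insert.mp huv with h | h
  · exact absurd (h ▸ mem_image_of_mem _ (mem_univ u)) hx
  · exact mem_singleton.mp h ▸ mem_image_of_mem _ (mem_univ u)

theorem stmt2_general (n k : ℕ) (hk : 4 ≤ k) (c : Fin n → Fin n → ℕ)
    (hcolors : (Finset.univ ×ˢ Finset.univ).image (fun p : Fin n × Fin n => c p.1 p.2)
      = Finset.Icc 1 k)
    (h : ¬ hasRainbowK13 c)
    (hdeg : ∀ u : Fin n, (Finset.univ.image (fun v => c u v)).card = 2)
    (hint : ∀ u u' : Fin n,
      ((Finset.univ.image (fun v => c u v)) ∩ (Finset.univ.image (fun v => c u' v))).Nonempty)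
    (u₁ u₂ : Fin n)
    (h1 : Finset.univ.image (fun v => c u₁ v) = ({1, 2} : Finset ℕ))
    (h2 : Finset.univ.image (fun v => c u₂ v) = ({1, 3} : Finset ℕ)) :
    (∀ i : ℕ, 4 ≤ i → i ≤ k → ∀ u : Fin n,
      i ∈ Finset.univ.image (fun v => c u v) →
      Finset.univ.image (fun v => c u v) = ({1, i} : Finset ℕ)) ∧
    (∀ v : Fin n, ((Finset.univ.image (fun u => c u v)) \ ({1} : Finset ℕ)).card ≤ 1) := by
  have colors_eq_one_pair : ∀ i : ℕ, 4 ≤ i → ∀ u : Fin n,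
      i ∈ univ.image (fun v => c u v) → univ.image (fun v => c u v) = ({1, i} : Finset ℕ) := fun i hi u hiu =>
    eq_pair_of_inter_pair_nonempty (b := 2) (c := 3) (hdeg u) hiu (by omega) (by omega)
      (by omega) (by omega) (h1 ▸ hint u u₁) (h2 ▸ hint u u₂)
  refine ⟨fun i hi _ => colors_eq_one_pair i hi, fun v => ?_⟩
  obtain ⟨⟨u₄, v₄⟩, -, huv₄⟩ :=
    mem_image.mp (hcolors ▸ mem_Icc.mpr ⟨by omega, hk⟩ : 4 ∈ _)
  have h4 := colors_eq_one_pair 4 le_rfl u₄ (mem_image.mpr ⟨v₄, mem_univ _, huv₄⟩)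
  by_cases h1v : 1 ∈ univ.image fun u => c u v
  · rw [sdiff_singleton_eq_erase, card_erase_of_mem h1v]
    have := card_image_col_le_two_of_not_hasRainbowK13 h v
    omega
  · have : ({2, 3, 4} : Finset ℕ) ⊆ univ.image fun u => c u v := by
      simp only [insert_subset_iff, singleton_subset_iff]
      exact ⟨mem_image_col_of_image_row_eq_pair h1 h1v, mem_image_col_of_image_row_eq_pair h2 h1v,
        mem_image_col_of_image_row_eq_pair h4 h1v⟩
    have := (card_le_card this).trans (card_image_col_le_two_of_not_hasRainbowK13 h v)
    simp at this

/-- no rainbow `K_{1,3}`, exactly `k ≥ 4` colors (labeled `1,…,k`),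
every vertex of `U` sees exactly 2 colors, color sets of vertices of `U` pairwise
intersect, and `C(u₁) = {1,2}`, `C(u₂) = {1,3}`.  Then every vertex of `U` incident
with a color `i ∈ {4,…,k}` has color set `{1,i}`, and every vertex of `V` sees at
most one color different from color 1. -/
theorem stmt2 (n k : ℕ) (hn : 3 ≤ n) (hk : 4 ≤ k) (c : Fin n → Fin n → ℕ)
    (hcolors : (Finset.univ ×ˢ Finset.univ).image (fun p : Fin n × Fin n => c p.1 p.2)
      = Finset.Icc 1 k)
    (h : ¬ hasRainbowK13 c)
    (hdeg : ∀ u : Fin n, (Finset.univ.image (fun v => c u v)).card = 2)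
    (hint : ∀ u u' : Fin n,
      ((Finset.univ.image (fun v => c u v)) ∩ (Finset.univ.image (fun v => c u' v))).Nonempty)
    (u₁ u₂ : Fin n)
    (h1 : Finset.univ.image (fun v => c u₁ v) = ({1, 2} : Finset ℕ))
    (h2 : Finset.univ.image (fun v => c u₂ v) = ({1, 3} : Finset ℕ)) :
    (∀ i : ℕ, 4 ≤ i → i ≤ k → ∀ u : Fin n,
      i ∈ Finset.univ.image (fun v => c u v) →
      Finset.univ.image (fun v => c u v) = ({1, i} : Finset ℕ)) ∧
    (∀ v : Fin n, ((Finset.univ.image (fun u => c u v)) \ ({1} : Finset ℕ)).card ≤ 1) :=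
  stmt2_general n k hk c hcolors h hdeg hint u₁ u₂ h1 h2
end

section
/- For integers k ≥ 3 and r, l ≥ 2, every edge-coloring of K_{N,N} with exactly k colors, where N ≥ k(⌊r/2⌋ + ⌊(r+l)/2⌋) − k + 1, contains either a rainbow path P_4 or a monochromatic copy of P_r ∪ P_{r+l}. -/
open Function Finset SimpleGraph

/-!
Without a rainbow `P₄`, if a vertex `u₀ ∈ U` and a vertex `v₀ ∈ V` both see two colors, then `u₀`
sees exactly two colors `x ≠ y` and every edge has color `x` or `y`. So with at least three colors
either every vertex of `U` or every vertex of `V` sees a single color. In the first case, pigeonhole gives `⌊r/2⌋ + ⌊(r+l)/2⌋` vertices of `U` of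
the same color; with all of `V` they span a monochromatic complete bipartite graph, into which
both paths embed by putting their odd-indexed vertices in `U` and the even-indexed ones in `V`.
-/

section Rainbow

variable {N : ℕ} {γ : Type*} {c : Fin N → Fin N → γ}

theorem eq_of_not_hasRainbowP4 (h : ¬ hasRainbowP4 c) {u₁ u₂ v₁ v₂ : Fin N}
    (h₁ : c u₁ v₁ ≠ c u₂ v₁) (h₂ : c u₂ v₁ ≠ c u₂ v₂) : c u₁ v₁ = c u₂ v₂ := by
  by_contra h₃
  exact h (Or.inl ⟨u₁, u₂, v₁, v₂, fun hu => h₁ (by rw [hu]), fun hv => h₂ (by rw [hv]),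
    h₁, h₃, h₂⟩)

theorem eq_of_not_hasRainbowP4' (h : ¬ hasRainbowP4 c) {u₁ u₂ v₁ v₂ : Fin N}
    (h₁ : c u₁ v₁ ≠ c u₁ v₂) (h₂ : c u₁ v₂ ≠ c u₂ v₂) : c u₁ v₁ = c u₂ v₂ := by
  by_contra h₃
  exact h (Or.inr ⟨v₁, v₂, u₁, u₂, fun hv => h₁ (by rw [hv]), fun hu => h₂ (by rw [hu]),
    h₁, h₃, h₂⟩)

theorem forall_eq_or_eq_of_not_hasRainbowP4 (h : ¬ hasRainbowP4 c) {u₀ u₁ v₀ v₁ : Fin N}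
    (hv₁ : c u₀ v₁ ≠ c u₀ v₀) (hu₁ : c u₁ v₀ ≠ c u₀ v₀) (u v : Fin N) :
    c u v = c u₀ v₀ ∨ c u v = c u₀ v₁ := by
  have hrow : ∀ v, c u₀ v = c u₀ v₀ ∨ c u₀ v = c u₀ v₁ := by
    intro v
    refine or_iff_not_imp_left.2 fun hv => ?_
    -- the paths `v u₀ v₀ u₁` and `v₁ u₀ v₀ u₁`
    rw [eq_of_not_hasRainbowP4' h hv hu₁.symm, eq_of_not_hasRainbowP4' h hv₁ hu₁.symm]
  by_cases huv : c u₀ v = c u v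
  · exact huv ▸ hrow v
  -- the path `v' u₀ v u`, where `v'` is `v₀` or `v₁`, whichever has the other color in row `u₀`
  rcases hrow v with hv | hv
  · exact Or.inr (eq_of_not_hasRainbowP4' h (hv ▸ hv₁) huv).symm
  · exact Or.inl (eq_of_not_hasRainbowP4' h (hv ▸ hv₁.symm) huv).symm

theorem rows_const_or_cols_const_or_two_colors_of_not_hasRainbowP4 (h : ¬ hasRainbowP4 c) :
    (∀ u v v', c u v = c u v') ∨ (∀ u u' v, c u v = c u' v) ∨
      ∃ x y, ∀ u v, c u v = x ∨ c u v = y := by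
  by_cases hrow : ∀ u v v', c u v = c u v'
  · exact Or.inl hrow
  by_cases hcol : ∀ u u' v, c u v = c u' v
  · exact Or.inr (Or.inl hcol)
  push Not at hrow hcol
  obtain ⟨u₀, v, v', hv⟩ := hrow
  obtain ⟨u, u', v₀, hu⟩ := hcol
  obtain ⟨v₁, hv₁⟩ : ∃ v₁, c u₀ v₁ ≠ c u₀ v₀ := by
    by_contra! h'
    exact hv ((h' v).trans (h' v').symm)
  obtain ⟨u₁, hu₁⟩ : ∃ u₁, c u₁ v₀ ≠ c u₀ v₀ := by
    by_contra! h'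
    exact hu ((h' u).trans (h' u').symm)
  exact Or.inr (Or.inr ⟨_, _, forall_eq_or_eq_of_not_hasRainbowP4 h hv₁ hu₁⟩)

end Rainbow

def colorClassGraph {N : ℕ} {γ : Type*} (c : Fin N → Fin N → γ) (i : γ) :
    SimpleGraph (Fin N ⊕ Fin N) where
  Adj p q := ∃ u v, c u v = i ∧ (p = .inl u ∧ q = .inr v ∨ p = .inr v ∧ q = .inl u)
  symm := ⟨fun _ _ ⟨u, v, huv, h⟩ => ⟨u, v, huv, h.symm.imp And.symm And.symm⟩⟩
  loopless := ⟨fun _ ⟨_, _, _, h⟩ => by rcases h with ⟨rfl, h⟩ | ⟨rfl, h⟩ <;> cases h⟩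

section ColorClass

variable {N : ℕ} {γ α β : Type*} {c : Fin N → Fin N → γ} {i : γ}

theorem hasMonoCopy_of_isContained {H : SimpleGraph α} (h : H ⊑ colorClassGraph c i) :
    hasMonoCopy c H :=
  let ⟨f⟩ := h
  ⟨i, f, f.injective, fun _ _ hab => f.toHom.map_adj hab⟩

def colorClassGraphTransposeIso (c : Fin N → Fin N → γ) (i : γ) :
    colorClassGraph (fun v u => c u v) i ≃g colorClassGraph c i where
  toEquiv := Equiv.sumComm _ _
  map_rel_iff' {p q} := by
    rcases p with p | p <;> rcases q with q | q <;> simp [colorClassGraph]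

theorem completeBipartiteGraph_isContained_colorClassGraph [Fintype α] [Fintype β]
    {S : Finset (Fin N)} (hS : ∀ u ∈ S, ∀ v, c u v = i)
    (hα : Fintype.card α ≤ #S) (hβ : Fintype.card β ≤ N) :
    completeBipartiteGraph α β ⊑ colorClassGraph c i := by
  obtain ⟨σ⟩ : Nonempty (α ↪ S) := Function.Embedding.nonempty_of_card_le (by simpa using hα)
  obtain ⟨τ⟩ : Nonempty (β ↪ Fin N) := Function.Embedding.nonempty_of_card_le (by simpa using hβ)
  refine ⟨⟨⟨Sum.map (fun a => (σ a : Fin N)) τ, ?_⟩, ?_⟩⟩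
  · rintro (a | b) (a' | b') hadj
    · simp at hadj
    · exact ⟨_, _, hS _ (σ a).2 _, Or.inl ⟨rfl, rfl⟩⟩
    · exact ⟨_, _, hS _ (σ a').2 _, Or.inr ⟨rfl, rfl⟩⟩
    · simp at hadj
  · exact Sum.map_injective.2 ⟨Subtype.val_injective.comp σ.injective, τ.injective⟩

theorem exists_completeBipartiteGraph_isContained_colorClassGraph [Fintype γ] [Fintype α]
    [Fintype β] (hrow : ∀ u v v', c u v = c u v')
    (hα : Fintype.card γ * (Fintype.card α - 1) < N) (hβ : Fintype.card β ≤ N) :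
    ∃ i, completeBipartiteGraph α β ⊑ colorClassGraph c i := by
  classical
  have v₀ : Fin N := ⟨0, by omega⟩
  obtain ⟨i, hi⟩ := Fintype.exists_lt_card_fiber_of_mul_lt_card (fun u => c u v₀)
    (by simpa using hα)
  refine ⟨i, completeBipartiteGraph_isContained_colorClassGraph (S := {u | c u v₀ = i})
    (fun u hu v => ?_) (by omega) hβ⟩
  rw [hrow u v v₀]
  simpa using hu

end ColorClass

section Embedding

variable {α β α' β' : Type*}

theorem pathGraph_isContained_completeBipartiteGraph (n : ℕ) :
    pathGraph n ⊑ completeBipartiteGraph (Fin (n / 2)) (Fin ((n + 1) / 2)) := by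
  refine ⟨⟨⟨fun j => if h : (j : ℕ) % 2 = 1 then .inl ⟨j / 2, by omega⟩
    else .inr ⟨j / 2, by omega⟩, ?_⟩, ?_⟩⟩
  · intro j j' hadj
    rw [pathGraph_adj] at hadj
    have hj' : (j' : ℕ) % 2 = 1 ↔ ¬ (j : ℕ) % 2 = 1 := by omega
    by_cases hj : (j : ℕ) % 2 = 1 <;> simp [hj, hj']
  · intro j j' hjj'
    by_cases hj : (j : ℕ) % 2 = 1 <;> by_cases hj' : (j' : ℕ) % 2 = 1 <;>
      simp only [RelHom.coeFn_mk, hj, hj', ↓reduceDIte, Sum.inl.injEq, Sum.inr.injEq,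
        Fin.mk.injEq, reduceCtorEq] at hjj' <;>
      omega

theorem SimpleGraph.IsContained.sum {G : SimpleGraph α} {G' : SimpleGraph α'} {H : SimpleGraph β}
    {H' : SimpleGraph β'} : G ⊑ G' → H ⊑ H' → G ⊕g H ⊑ G' ⊕g H' :=
  fun ⟨f⟩ ⟨g⟩ => ⟨(Hom.sum f.toHom g.toHom).toCopy
    (Sum.map_injective.2 ⟨f.injective, g.injective⟩)⟩

theorem completeBipartiteGraph_sum_isContained :
    completeBipartiteGraph α β ⊕g completeBipartiteGraph α' β' ⊑
      completeBipartiteGraph (α ⊕ α') (β ⊕ β') :=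
  ⟨⟨⟨Equiv.sumSumSumComm α β α' β', by
    rintro ((a | b) | (a | b)) ((a' | b') | (a' | b')) <;> simp⟩,
    (Equiv.sumSumSumComm α β α' β').injective⟩⟩

end Embedding

theorem stmt5_general (k r l N : ℕ) (hk : 3 ≤ k) (hr : 2 ≤ r)
    (hN : k * (r / 2 + (r + l) / 2) - k + 1 ≤ N)
    (c : Fin N → Fin N → Fin k) (hc : ∀ i : Fin k, ∃ u v, c u v = i) :
    hasRainbowP4 c ∨ hasMonoCopy c (pathGraph r ⊕g pathGraph (r + l)) := by
  refine or_iff_not_imp_left.2 fun h4 => ?_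
  have hα : Fintype.card (Fin k) * (Fintype.card (Fin (r / 2) ⊕ Fin ((r + l) / 2)) - 1) < N := by
    simp only [Fintype.card_sum, Fintype.card_fin, Nat.mul_sub_one]
    omega
  have hβ : Fintype.card (Fin ((r + 1) / 2) ⊕ Fin ((r + l + 1) / 2)) ≤ N := by
    have h3k := Nat.mul_le_mul_right (r / 2 + (r + l) / 2 - 1) hk
    rw [← Nat.mul_sub_one] at hN
    simp only [Fintype.card_sum, Fintype.card_fin]
    omega
  obtain ⟨i, hi⟩ : ∃ i, completeBipartiteGraph (Fin (r / 2) ⊕ Fin ((r + l) / 2))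
      (Fin ((r + 1) / 2) ⊕ Fin ((r + l + 1) / 2)) ⊑ colorClassGraph c i := by
    rcases rows_const_or_cols_const_or_two_colors_of_not_hasRainbowP4 h4 with
      hrow | hcol | ⟨x, y, hxy⟩
    · exact exists_completeBipartiteGraph_isContained_colorClassGraph hrow hα hβ
    · obtain ⟨i, hi⟩ := exists_completeBipartiteGraph_isContained_colorClassGraph
        (c := fun v u => c u v) (fun v u u' => hcol u u' v) hα hβ
      exact ⟨i, hi.trans ⟨(colorClassGraphTransposeIso c i).toCopy⟩⟩
    · have hk2 : #(univ : Finset (Fin k)) ≤ #{x, y} := card_le_card fun j _ => by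
        obtain ⟨u, v, rfl⟩ := hc j
        simpa using hxy u v
      have : k ≤ 2 := by simpa using hk2.trans card_le_two
      omega
  exact hasMonoCopy_of_isContained
    (((pathGraph_isContained_completeBipartiteGraph r).sum
      (pathGraph_isContained_completeBipartiteGraph (r + l))).trans
      (completeBipartiteGraph_sum_isContained.trans hi))

/-- for `k ≥ 3`, `r, l ≥ 2` and `N ≥ k(⌊r/2⌋+⌊(r+l)/2⌋) − k + 1`,
every exact `k`-edge-coloring of `K_{N,N}` contains a rainbow `P₄` or a
monochromatic `P_r ∪ P_{r+l}`. -/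
theorem stmt5 (k r l N : ℕ) (hk : 3 ≤ k) (hr : 2 ≤ r) (hl : 2 ≤ l)
    (hN : k * (r / 2 + (r + l) / 2) - k + 1 ≤ N)
    (c : Fin N → Fin N → Fin k) (hc : ∀ i : Fin k, ∃ u v, c u v = i) :
    hasRainbowP4 c ∨ hasMonoCopy c (pathGraph r ⊕g pathGraph (r + l)) :=
  stmt5_general k r l N hk hr hN c hc
end

section
/- For integers k ≥ 3, m ≥ 2, l ≥ 2, bgr_k(P_4 : P_m ∪ C_{2l}) = k(l + ⌊m/2⌋) − k + 1. -/
/-!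
Without a rainbow `P₄`, a colouring of `K_{N,N}` that uses at least three colours is constant
along every column or along every row: a row showing two colours shows every colour (an entry
outside its row's colours would start a rainbow `u₁ v₁ u₂ v₂`), and two further colours in
that row pin down each column. Put `s = l + ⌊m/2⌋`. If `N > k (s - 1)`, some colour then fills
`s` whole columns (or rows), and `P_m ∪ C_{2l}`, whose parity bipartition has parts
`⌈m/2⌉ + l` and `⌊m/2⌋ + l`, fits into that complete bipartite graph. Conversely, colouring
`K_{k(s-1),k(s-1)}` by blocks of `s - 1` columns leaves no rainbow `P₄`, while a monochromatic
`P_m ∪ C_{2l}` would need a distinct column of its colour for each of its `s` disjoint edges.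
-/

open Function Finset SimpleGraph

/-- `n` witnesses the bipartite Gallai–Ramsey property for a rainbow `P₄`
versus a monochromatic `P_m ∪ C_{2l}` with `k` colors. -/
def bgrP4PC (k m l n : ℕ) : Prop :=
  k ≤ n ^ 2 ∧ ∀ N : ℕ, n ≤ N → ∀ c : Fin N → Fin N → Fin k,
    (∀ i : Fin k, ∃ u v, c u v = i) →
    hasRainbowP4 c ∨ hasMonoCopy c (pathGraph m ⊕g cycleGraph (2 * l))

section Structure

variable {N : ℕ} {γ : Type*} {c : Fin N → Fin N → γ}

theorem eq_or_eq_of_not_rbP4pat (h : ¬ rbP4pat c) (u₁ : Fin N) {u₂ v₁ v₂ : Fin N}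
    (hne : c u₂ v₁ ≠ c u₂ v₂) : c u₁ v₁ = c u₂ v₁ ∨ c u₁ v₁ = c u₂ v₂ := by
  by_contra! hcon
  exact h ⟨u₁, u₂, v₁, v₂, fun hu => hcon.1 (by rw [hu]), fun hv => hne (by rw [hv]),
    hcon.1, hcon.2, hne⟩

theorem exists_eq_row_of_not_rbP4pat (h : ¬ rbP4pat c) {u₀ v₁ v₂ : Fin N}
    (hne : c u₀ v₁ ≠ c u₀ v₂) (u w : Fin N) : ∃ v, c u w = c u₀ v := by
  obtain ⟨v, hv⟩ : ∃ v, c u₀ w ≠ c u₀ v := by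
    by_contra! hall
    exact hne ((hall v₁).symm.trans (hall v₂))
  rcases eq_or_eq_of_not_rbP4pat h u hv with h' | h'
  exacts [⟨w, h'⟩, ⟨v, h'⟩]

theorem eq_of_not_rbP4pat_of_ne_of_ne (h : ¬ rbP4pat c) (u : Fin N) {u₀ a b v : Fin N}
    (ha : c u₀ v ≠ c u₀ a) (hb : c u₀ v ≠ c u₀ b) (hab : c u₀ a ≠ c u₀ b) :
    c u v = c u₀ v := by
  rcases eq_or_eq_of_not_rbP4pat h u ha with h₁ | h₁
  · exact h₁
  rcases eq_or_eq_of_not_rbP4pat h u hb with h₂ | h₂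
  · exact h₂
  exact absurd (h₁.symm.trans h₂) hab

theorem col_const_or_row_const_of_not_rbP4pat [Fintype γ] (hγ : 3 ≤ Fintype.card γ)
    (hsurj : ∀ i : γ, ∃ u v, c u v = i) (h : ¬ rbP4pat c) :
    (∀ u u' v, c u v = c u' v) ∨ (∀ u v v', c u v = c u v') := by
  classical
  by_cases hrow : ∀ u v v', c u v = c u v'
  · exact Or.inr hrow
  push Not at hrow
  obtain ⟨u₀, v₁, v₂, hne⟩ := hrow
  have hrow_all : ∀ i, ∃ a, c u₀ a = i := fun i => by
    obtain ⟨x, y, hxy⟩ := hsurj i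
    obtain ⟨a, ha⟩ := exists_eq_row_of_not_rbP4pat h hne x y
    exact ⟨a, ha.symm.trans hxy⟩
  have hcol : ∀ u v, c u v = c u₀ v := by
    intro u v
    have : 1 < #(univ.erase (c u₀ v)) := by
      rw [card_erase_of_mem (mem_univ _), card_univ]; omega
    obtain ⟨i, hi, j, hj, hij⟩ := one_lt_card.1 this
    obtain ⟨a, rfl⟩ := hrow_all i
    obtain ⟨b, rfl⟩ := hrow_all j
    exact eq_of_not_rbP4pat_of_ne_of_ne h u (ne_of_mem_erase hi).symm
      (ne_of_mem_erase hj).symm hij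
  exact Or.inl fun u u' v => (hcol u v).trans (hcol u' v).symm

theorem not_hasRainbowP4_of_col_const (hc : ∀ u u' v, c u v = c u' v) : ¬ hasRainbowP4 c := by
  rintro (⟨u₁, u₂, v, -, -, -, h, -, -⟩ | ⟨-, v, u₁, u₂, -, -, -, -, h⟩) <;> exact h (hc u₁ u₂ v)

end Structure

section Upper

variable {N : ℕ} {γ α : Type*} {c : Fin N → Fin N → γ} {H : SimpleGraph α}

theorem hasMonoCopy_of_transpose (h : hasMonoCopy (fun v u => c u v) H) : hasMonoCopy c H := by
  obtain ⟨i, f, hf, hH⟩ := h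
  refine ⟨i, Sum.swap ∘ f, Sum.swap_leftInverse.injective.comp hf, fun a b hab => ?_⟩
  obtain ⟨v, u, hc, hab'⟩ := hH a b hab
  refine ⟨u, v, hc, ?_⟩
  rcases hab' with ⟨ha, hb⟩ | ⟨ha, hb⟩
  · exact Or.inr ⟨by simp [ha], by simp [hb]⟩
  · exact Or.inl ⟨by simp [ha], by simp [hb]⟩

theorem hasMonoCopy_of_isContained_completeBipartiteGraph {X Y : Type*} [Fintype X] [Fintype Y]
    (hH : H ⊑ completeBipartiteGraph X Y) {S T : Finset (Fin N)} {i : γ}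
    (hS : Fintype.card X ≤ #S) (hT : Fintype.card Y ≤ #T) (hc : ∀ u ∈ S, ∀ v ∈ T, c u v = i) :
    hasMonoCopy c H := by
  obtain ⟨φ⟩ := hH
  obtain ⟨eS⟩ : Nonempty (X ↪ S) := Function.Embedding.nonempty_of_card_le (by simpa)
  obtain ⟨eT⟩ : Nonempty (Y ↪ T) := Function.Embedding.nonempty_of_card_le (by simpa)
  refine ⟨i, Sum.map (fun x => (eS x).1) (fun y => (eT y).1) ∘ φ,
    (Subtype.val_injective.comp eS.injective).sumMap
      (Subtype.val_injective.comp eT.injective) |>.comp φ.injective, fun a b hab => ?_⟩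
  have hφ := φ.toHom.map_adj hab
  rcases hx : φ a with x | y <;> rcases hy : φ b with x' | y' <;> simp [hx, hy] at hφ
  · exact ⟨_, _, hc _ (eS x).2 _ (eT y').2, Or.inl ⟨by simp [hx], by simp [hy]⟩⟩
  · exact ⟨_, _, hc _ (eS x').2 _ (eT y).2, Or.inr ⟨by simp [hx], by simp [hy]⟩⟩

theorem hasMonoCopy_of_col_const [Fintype γ] {X Y : Type*} [Fintype X] [Fintype Y]
    (hH : H ⊑ completeBipartiteGraph X Y) (hX : Fintype.card X ≤ N)
    (hY : Fintype.card γ * (Fintype.card Y - 1) < N) (hc : ∀ u u' v, c u v = c u' v) :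
    hasMonoCopy c H := by
  classical
  have u₀ : Fin N := ⟨0, by omega⟩
  obtain ⟨i, -, hi⟩ := exists_lt_card_fiber_of_mul_lt_card_of_maps_to
    (s := univ) (t := univ) (f := c u₀) (fun _ _ => mem_univ _) (by simpa using hY)
  exact hasMonoCopy_of_isContained_completeBipartiteGraph hH (S := univ)
    (T := {v | c u₀ v = i}) (by simpa using hX) (by omega)
    fun u _ v hv => (hc u u₀ v).trans (mem_filter.1 hv).2

theorem hasRainbowP4_or_hasMonoCopy [Fintype γ] (hγ : 3 ≤ Fintype.card γ)
    (hsurj : ∀ i : γ, ∃ u v, c u v = i) {X Y : Type*} [Fintype X] [Fintype Y]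
    (hH : H ⊑ completeBipartiteGraph X Y) (hX : Fintype.card X ≤ N)
    (hY : Fintype.card γ * (Fintype.card Y - 1) < N) :
    hasRainbowP4 c ∨ hasMonoCopy c H := by
  by_cases hr : hasRainbowP4 c
  · exact Or.inl hr
  refine Or.inr ?_
  rcases col_const_or_row_const_of_not_rbP4pat hγ hsurj (fun h => hr (Or.inl h)) with hc | hc
  · exact hasMonoCopy_of_col_const hH hX hY hc
  · exact hasMonoCopy_of_transpose <|
      hasMonoCopy_of_col_const hH hX hY fun v v' u => hc u v v'

end Upper

theorem isContained_completeBipartiteGraph_of_adj_mod_two_ne {n : ℕ} {G : SimpleGraph (Fin n)}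
    (hG : ∀ a b, G.Adj a b → a.val % 2 ≠ b.val % 2) :
    G ⊑ completeBipartiteGraph (Fin ((n + 1) / 2)) (Fin (n / 2)) := by
  let φ : Fin n → Fin ((n + 1) / 2) ⊕ Fin (n / 2) := fun a =>
    if h : a.val % 2 = 0 then .inl ⟨a / 2, by omega⟩ else .inr ⟨a / 2, by omega⟩
  have hφ : Function.Injective φ := fun a b hab => by
    simp only [φ] at hab
    split_ifs at hab <;> simp only [Sum.inl.injEq, Sum.inr.injEq,
      Fin.mk.injEq] at hab <;> exact Fin.ext (by omega)
  refine ⟨Hom.toCopy ⟨φ, fun {a b} hab => ?_⟩ hφ⟩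
  have := hG a b hab
  simp only [φ]
  split_ifs <;> first | omega | simp

theorem sum_isContained_completeBipartiteGraph {V W X Y X' Y' : Type*} {G : SimpleGraph V}
    {G' : SimpleGraph W} (h : G ⊑ completeBipartiteGraph X Y)
    (h' : G' ⊑ completeBipartiteGraph X' Y') :
    G ⊕g G' ⊑ completeBipartiteGraph (X ⊕ X') (Y ⊕ Y') := by
  obtain ⟨φ⟩ := h
  obtain ⟨φ'⟩ := h'
  let regroup : Copy (completeBipartiteGraph X Y ⊕g completeBipartiteGraph X' Y')
      (completeBipartiteGraph (X ⊕ X') (Y ⊕ Y')) :=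
    Hom.toCopy ⟨Equiv.sumSumSumComm X Y X' Y', by
      rintro ((x | y) | (x | y)) ((x' | y') | (x' | y')) <;> simp⟩ (Equiv.injective _)
  exact ⟨regroup.comp (Hom.toCopy (φ.toHom.sum φ'.toHom) (φ.injective.sumMap φ'.injective))⟩

theorem pathGraph_adj_mod_two_ne {n : ℕ} {a b : Fin n} (h : (pathGraph n).Adj a b) :
    a.val % 2 ≠ b.val % 2 := by
  rw [pathGraph_adj] at h
  omega

theorem cycleGraph_adj_mod_two_ne {l : ℕ} {a b : Fin (2 * l)} (h : (cycleGraph (2 * l)).Adj a b) :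
    a.val % 2 ≠ b.val % 2 := by
  have hmod : ∀ x y : Fin (2 * l), (x - y).val % 2 = (2 * l - y + x) % 2 := fun x y => by
    rw [Fin.sub_def, Nat.mod_mod_of_dvd _ (dvd_mul_right 2 l)]
  rw [cycleGraph_adj'] at h
  have := a.2
  have := b.2
  rcases h with h | h
  · have := hmod a b; omega
  · have := hmod b a; omega

theorem pathGraph_adj_succ {n j : ℕ} (hj : j + 1 < n) :
    (pathGraph n).Adj ⟨j, by omega⟩ ⟨j + 1, hj⟩ :=
  pathGraph_adj.2 (Or.inl rfl)

theorem cycleGraph_adj_succ {n j : ℕ} (hj : j + 1 < n) :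
    (cycleGraph n).Adj ⟨j, by omega⟩ ⟨j + 1, hj⟩ := by
  rw [cycleGraph_adj']
  right
  rw [Fin.sub_def]
  show (n - j + (j + 1)) % n = 1
  rw [show n - j + (j + 1) = n + 1 by omega, Nat.add_mod_left, Nat.mod_eq_of_lt (by omega)]

namespace SimpleGraph

/-- The edges `a r — b r`, `r : ι`, of `H` are pairwise vertex-disjoint. -/
def HasDisjointEdges {α : Type*} (H : SimpleGraph α) (ι : Type*) : Prop :=
  ∃ a b : ι → α, (∀ r, H.Adj (a r) (b r)) ∧ Function.Injective (Sum.elim a b)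

theorem HasDisjointEdges.sum {V W ι ι' : Type*} {G : SimpleGraph V} {G' : SimpleGraph W}
    (h : G.HasDisjointEdges ι) (h' : G'.HasDisjointEdges ι') :
    (G ⊕g G').HasDisjointEdges (ι ⊕ ι') := by
  obtain ⟨a, b, hab, hinj⟩ := h
  obtain ⟨a', b', hab', hinj'⟩ := h'
  refine ⟨Sum.map a a', Sum.map b b', fun r => ?_, ?_⟩
  · rcases r with r | r
    exacts [hab r, hab' r]
  · have : Sum.elim (Sum.map a a') (Sum.map b b') =
        Sum.map (Sum.elim a b) (Sum.elim a' b') ∘ Equiv.sumSumSumComm ι ι' ι ι' := by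
      ext ((r | r) | (r | r)) <;> rfl
    rw [this]
    exact (hinj.sumMap hinj').comp (Equiv.injective _)

theorem hasDisjointEdges_of_adj_succ {n : ℕ} {G : SimpleGraph (Fin n)}
    (hG : ∀ j (hj : j + 1 < n), G.Adj ⟨j, by omega⟩ ⟨j + 1, hj⟩) :
    G.HasDisjointEdges (Fin (n / 2)) := by
  refine ⟨fun r => ⟨2 * r, by omega⟩, fun r => ⟨2 * r + 1, by omega⟩,
    fun r => hG (2 * r) (by omega), ?_⟩
  refine Function.Injective.sumElim (fun r r' h => ?_) (fun r r' h => ?_) (fun r r' h => ?_) <;>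
    simp only [Fin.mk.injEq] at h
  · exact Fin.ext (by omega)
  · exact Fin.ext (by omega)
  · omega

/-- Each of the disjoint edges has its own endpoint on the column side, and that column
carries the colour of the copy. -/
theorem HasDisjointEdges.exists_card_le_of_hasMonoCopy {N : ℕ} {γ α ι : Type*} [DecidableEq γ]
    [Fintype ι] {c : Fin N → Fin N → γ} {H : SimpleGraph α} (hH : H.HasDisjointEdges ι)
    (h : hasMonoCopy c H) :
    ∃ i, Fintype.card ι ≤ #{v | ∃ u, c u v = i} := by
  obtain ⟨a, b, hab, hinj⟩ := hH
  obtain ⟨i, f, hf, hcopy⟩ := h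
  choose u v hc hside using fun r => hcopy _ _ (hab r)
  have hend : ∀ r, ∃ z : ι ⊕ ι, Sum.elim id id z = r ∧ f (Sum.elim a b z) = .inr (v r) := by
    intro r
    rcases hside r with ⟨-, h⟩ | ⟨h, -⟩
    exacts [⟨.inr r, rfl, h⟩, ⟨.inl r, rfl, h⟩]
  refine ⟨i, ?_⟩
  rw [← card_univ]
  refine card_le_card_of_injOn v (fun r _ => mem_filter.2 ⟨mem_univ _, u r, hc r⟩)
    fun r _ r' _ hv => ?_
  obtain ⟨z, rfl, hz⟩ := hend r
  obtain ⟨z', rfl, hz'⟩ := hend r'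
  rw [hinj (hf (hz.trans (hv ▸ hz'.symm)))]

end SimpleGraph

def blockColoring (k t : ℕ) : Fin (k * t) → Fin (k * t) → Fin k :=
  fun _ v => ⟨v / t, Nat.div_lt_of_lt_mul (Nat.mul_comm k t ▸ v.2)⟩

theorem blockColoring_surjective {k t : ℕ} (ht : 0 < t) (i : Fin k) :
    ∃ u v, blockColoring k t u v = i := by
  have hi : i.val * t < k * t := Nat.mul_lt_mul_of_pos_right i.2 ht
  exact ⟨⟨0, by omega⟩, ⟨i * t, hi⟩, Fin.ext (Nat.mul_div_cancel _ ht)⟩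

theorem not_hasMonoCopy_blockColoring {k t : ℕ} {α ι : Type*} [Fintype ι] {H : SimpleGraph α}
    (hH : H.HasDisjointEdges ι) (ht : t < Fintype.card ι) :
    ¬ hasMonoCopy (blockColoring k t) H := by
  intro h
  obtain ⟨i, hi⟩ := hH.exists_card_le_of_hasMonoCopy h
  have hblock : #{v | ∃ u, blockColoring k t u v = i} ≤ t := by
    refine (card_le_card_of_injOn (fun v => v.val % t) (t := range t) (fun v _ => ?_)
      fun v hv w hw hvw => ?_).trans (card_range t).le
    · have : 0 < t := Nat.pos_of_ne_zero fun h => by simpa [h] using v.2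
      simpa using Nat.mod_lt _ this
    · simp only [blockColoring, coe_filter, mem_univ, true_and, Set.mem_ofPred_eq, Fin.ext_iff]
        at hv hw hvw
      obtain ⟨-, hv⟩ := hv
      obtain ⟨-, hw⟩ := hw
      exact Fin.ext (by rw [← Nat.div_add_mod v t, ← Nat.div_add_mod w t, hv, hw, hvw])
  omega

theorem pathGraph_sum_cycleGraph_isContained (m l : ℕ) :
    pathGraph m ⊕g cycleGraph (2 * l) ⊑ completeBipartiteGraph
      (Fin ((m + 1) / 2) ⊕ Fin ((2 * l + 1) / 2)) (Fin (m / 2) ⊕ Fin (2 * l / 2)) :=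
  sum_isContained_completeBipartiteGraph
    (isContained_completeBipartiteGraph_of_adj_mod_two_ne fun _ _ => pathGraph_adj_mod_two_ne)
    (isContained_completeBipartiteGraph_of_adj_mod_two_ne fun _ _ => cycleGraph_adj_mod_two_ne)

theorem pathGraph_sum_cycleGraph_hasDisjointEdges (m l : ℕ) :
    (pathGraph m ⊕g cycleGraph (2 * l)).HasDisjointEdges (Fin (m / 2) ⊕ Fin (2 * l / 2)) :=
  (hasDisjointEdges_of_adj_succ fun _ => pathGraph_adj_succ).sum
    (hasDisjointEdges_of_adj_succ fun _ => cycleGraph_adj_succ)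

theorem stmt7_general (k m l : ℕ) (hk : 3 ≤ k) (hl : 2 ≤ l) :
    bgrP4PC k m l (k * (l + m / 2) - k + 1) ∧
    (∀ n : ℕ, bgrP4PC k m l n → k * (l + m / 2) - k + 1 ≤ n) := by
  obtain ⟨t, ht⟩ : ∃ t, l + m / 2 = t + 1 := ⟨l + m / 2 - 1, by omega⟩
  have hkt : 3 * t ≤ k * t := Nat.mul_le_mul_right t hk
  have hY : m / 2 + 2 * l / 2 - 1 = t := by omega
  rw [ht, Nat.mul_succ, Nat.add_sub_cancel]
  refine ⟨⟨?_, fun N hN c hsurj => ?_⟩, fun n hn => ?_⟩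
  · calc k ≤ k * t + 1 := by have := Nat.le_mul_of_pos_right k (show 0 < t by omega); omega
      _ ≤ (k * t + 1) ^ 2 := Nat.le_self_pow two_ne_zero _
  · refine hasRainbowP4_or_hasMonoCopy (by simpa using hk) hsurj
      (pathGraph_sum_cycleGraph_isContained m l) ?_ ?_ <;>
      simp only [Fintype.card_sum, Fintype.card_fin, hY] <;> omega
  · by_contra! hn'
    rcases hn.2 (k * t) (by omega) (blockColoring k t) (blockColoring_surjective (by omega))
      with h | h
    · exact not_hasRainbowP4_of_col_const (fun _ _ _ => rfl) h
    · exact not_hasMonoCopy_blockColoring (pathGraph_sum_cycleGraph_hasDisjointEdges m l)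
        (by simp only [Fintype.card_sum, Fintype.card_fin]; omega) h

/-- for `k ≥ 3`, `m, l ≥ 2`,
`bgr_k(P₄ : P_m ∪ C_{2l}) = k(l + ⌊m/2⌋) − k + 1`. -/
theorem stmt7 (k m l : ℕ) (hk : 3 ≤ k) (hm : 2 ≤ m) (hl : 2 ≤ l) :
    bgrP4PC k m l (k * (l + m / 2) - k + 1) ∧
    (∀ n : ℕ, bgrP4PC k m l n → k * (l + m / 2) - k + 1 ≤ n) :=
  stmt7_general k m l hk hl
end

section
/- For integers 2 ≤ s < t with t ≥ 5 and t + s − ⌊t/2⌋ ≤ k ≤ t + s, bgr_k(K_{1,3} : K_{s,t}) = t + s. -/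
open Function Finset SimpleGraph

/-- `n` witnesses the bipartite Gallai–Ramsey property for a rainbow `K_{1,3}`
versus a monochromatic `K_{s,t}` with `k` colors. -/
def bgrK13Kst (k s t n : ℕ) : Prop :=
  k ≤ n ^ 2 ∧ ∀ N : ℕ, n ≤ N → ∀ c : Fin N → Fin N → Fin k,
    (∀ i : Fin k, ∃ u v, c u v = i) →
    hasRainbowK13 c ∨ hasMonoKst c s t


/-!
Without a rainbow `K_{1,3}` every row and every column sees at most two colours. Any two row
palettes then meet (otherwise every column, hence every colour, lies in their union of at most
four colours), and a pairwise meeting family of 2-sets covering at least five colours is a star: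
some base colour `a` occurs in every row and every column, and off `a` each row and each column is
monochromatic.

For a set `Y` of non-base colours, the rows meeting `Y` and the columns avoiding `Y` therefore span
an `a`-coloured block, so avoiding a monochromatic `K_{s,t}` turns into inequalities between the
numbers `ρ x` and `γ x` of rows and columns carrying each colour `x`. With at least
`s + ⌈t/2⌉ - 1` non-base colours these are inconsistent: fewer than `s` colours have `ρ = 1`, so
some `⌈t/2⌉` colours with `ρ ≥ 2` form a set `Y` whose row and column counts both exceed `N - s`;
the remaining colours include one with `ρ = γ = 1`, and swapping it for any colour of `Y` must not
reach `t`, which forces `ρ ≥ 3` on all of `Y`, more than `Y` minus one colour can afford.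

The lower bound comes from a diagonal colouring of `K_{t+s-1,t+s-1}`.
-/

section BlockFree

variable {κ : Type*} {X : Finset κ} {f g : κ → ℕ} {N s t : ℕ}

/-- Read `f x` and `g x` as the numbers of rows and of columns carrying the colour `x`: then no
set `Y` of colours leaves room for an `s × t` or a `t × s` block between the rows of `Y` and the
columns avoiding `Y`. -/
def BlockFree (X : Finset κ) (f g : κ → ℕ) (N s t : ℕ) : Prop :=
  ∀ Y ⊆ X, (s ≤ ∑ x ∈ Y, f x → N < ∑ x ∈ Y, g x + t) ∧ (t ≤ ∑ x ∈ Y, f x → N < ∑ x ∈ Y, g x + s)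

lemma card_le_sum_of_one_le {Y : Finset κ} (h : ∀ x ∈ Y, 1 ≤ f x) : #Y ≤ ∑ x ∈ Y, f x := by
  simpa using card_nsmul_le_sum Y f 1 h

lemma BlockFree.lt_sum_add_of_le_card (hfg : BlockFree X f g N s t) (hf1 : ∀ x ∈ X, 1 ≤ f x)
    {Y : Finset κ} (hY : Y ⊆ X) (hs : s ≤ #Y) : N < ∑ x ∈ Y, g x + t :=
  (hfg Y hY).1 (hs.trans (card_le_sum_of_one_le fun x hx => hf1 x (hY hx)))

variable [DecidableEq κ]

lemma BlockFree.sum_lt_of_le_card_sdiff (hfg : BlockFree X f g N s t) (hf1 : ∀ x ∈ X, 1 ≤ f x)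
    (hgN : ∑ x ∈ X, g x ≤ N) {W : Finset κ} (hW : W ⊆ X) (hs : s ≤ #(X \ W)) :
    ∑ x ∈ W, g x < t := by
  have := hfg.lt_sum_add_of_le_card hf1 sdiff_subset hs
  have := sum_sdiff hW (f := g)
  omega

theorem not_blockFree_and_blockFree (hs : 2 ≤ s) (hst : s < t) (hN : s + t ≤ N)
    (hX : s + (t - t / 2) ≤ #X + 1) (hf1 : ∀ x ∈ X, 1 ≤ f x) (hg1 : ∀ x ∈ X, 1 ≤ g x)
    (hfN : ∑ x ∈ X, f x ≤ N) (hgN : ∑ x ∈ X, g x ≤ N) :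
    ¬ (BlockFree X f g N s t ∧ BlockFree X g f N s t) := by
  rintro ⟨hfg, hgf⟩
  set h := t - t / 2
  have hsingle : #(X.filter (f · = 1)) < s := by
    by_contra! hL
    obtain ⟨S, hSL, hS⟩ := exists_subset_card_eq hL
    have hfS : ∑ x ∈ S, f x = s := by
      rw [sum_congr rfl fun x hx => (mem_filter.1 (hSL hx)).2]; simp [hS]
    have := hgf.lt_sum_add_of_le_card hg1 (hSL.trans (filter_subset _ _)) hS.ge
    omega
  obtain ⟨Y, hYH, hY⟩ : ∃ Y ⊆ X.filter (fun x => ¬ f x = 1), #Y = h := by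
    apply exists_subset_card_eq
    have := card_filter_add_card_filter_not (s := X) (p := (f · = 1))
    omega
  have hYX : Y ⊆ X := hYH.trans (filter_subset _ _)
  -- `Y` carries at least `t` rows, hence so many rows and columns that both overflow `N - s`.
  have hfY2 : #Y * 2 ≤ ∑ x ∈ Y, f x := by
    simpa using card_nsmul_le_sum Y f 2 fun x hx => by
      have := hf1 x (hYX hx); have := (mem_filter.1 (hYH hx)).2; omega
  have hgY : N < ∑ x ∈ Y, g x + s := (hfg Y hYX).2 (by omega)
  have hfY : N < ∑ x ∈ Y, f x + s := (hgf Y hYX).2 (by omega)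
  obtain ⟨l, hl, hl2⟩ : ∃ l ∈ X \ Y, f l + g l ≤ 2 := by
    have hcard := card_sdiff_of_subset hYX
    refine exists_le_of_sum_le (card_pos.1 (by omega)) ?_
    rw [sum_add_distrib, sum_const, smul_eq_mul]
    have := sum_sdiff hYX (f := f)
    have := sum_sdiff hYX (f := g)
    omega
  obtain ⟨hlX, hlY⟩ := mem_sdiff.1 hl
  have hfl := hf1 l hlX
  have hgl := hg1 l hlX
  -- Adding the colour `l` to `Y` minus a colour must keep both sums below `t`.
  have hsmall : ∀ x ∈ Y, ∑ y ∈ Y.erase x, f y + 2 ≤ t := by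
    intro x hx
    have hWX : Y.erase x ⊆ X := (erase_subset _ _).trans hYX
    have hcard : s ≤ #(X \ Y.erase x) := by
      rw [card_sdiff_of_subset hWX, card_erase_of_mem hx]; omega
    have hfW := hgf.sum_lt_of_le_card_sdiff hg1 hfN hWX hcard
    have hgW := hfg.sum_lt_of_le_card_sdiff hf1 hgN hWX hcard
    have hlW : l ∉ Y.erase x := fun h => hlY (mem_of_mem_erase h)
    have hZ := (hfg (insert l (Y.erase x)) (insert_subset hlX hWX)).2
    rw [sum_insert hlW, sum_insert hlW] at hZ
    omega
  have hthree : ∀ x ∈ Y, 3 ≤ f x := by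
    intro x hx
    have := hsmall x hx
    have := add_sum_erase Y f hx
    omega
  obtain ⟨x, hx⟩ : Y.Nonempty := card_pos.1 (by omega)
  have h3 : #(Y.erase x) * 3 ≤ ∑ y ∈ Y.erase x, f y := by
    simpa using card_nsmul_le_sum _ f 3 fun y hy => hthree y (mem_of_mem_erase hy)
  have := hsmall x hx
  rw [card_erase_of_mem hx] at h3
  omega

end BlockFree

lemma Finset.subset_pair_of_card_le_two {α : Type*} [DecidableEq α] {S : Finset α} {x y : α}
    (hS : #S ≤ 2) (hx : x ∈ S) (hy : y ∈ S) (hxy : x ≠ y) : S ⊆ {x, y} := by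
  intro z hz
  by_contra hz'
  simp only [mem_insert, mem_singleton, not_or] at hz'
  have := two_lt_card_iff.2 ⟨x, y, z, hx, hy, hz, hxy, Ne.symm hz'.1, Ne.symm hz'.2⟩
  omega

/-- A pairwise intersecting family of sets of size at most two is a star or lies inside a
triangle `{a₁, a₂, b}`. -/
theorem exists_mem_forall_of_pairwise_inter_nonempty {ι α : Type*} [DecidableEq α]
    (F : ι → Finset α) (hF2 : ∀ i, #(F i) ≤ 2) (hF : ∀ i j, (F i ∩ F j).Nonempty)
    (hbig : ∀ S : Finset α, (∀ i, F i ⊆ S) → 3 < #S) : ∃ a, ∀ i, a ∈ F i := by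
  by_contra! hno
  obtain ⟨i₀⟩ : Nonempty ι := by
    by_contra! hι
    simpa using hbig ∅ fun i => isEmptyElim i
  obtain ⟨a₁, ha₁⟩ := hF i₀ i₀
  obtain ⟨i₁, hi₁⟩ := hno a₁
  obtain ⟨a₂, ha₂⟩ := hF i₀ i₁
  obtain ⟨i₂, hi₂⟩ := hno a₂
  obtain ⟨b, hb⟩ := hF i₁ i₂
  rw [mem_inter] at ha₁ ha₂ hb
  have ha₁₂ : a₁ ≠ a₂ := by rintro rfl; exact hi₁ ha₂.2
  have hF₀ := subset_pair_of_card_le_two (hF2 i₀) ha₁.1 ha₂.1 ha₁₂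
  have ha₁i₂ : a₁ ∈ F i₂ := by
    obtain ⟨p, hp⟩ := hF i₀ i₂
    rw [mem_inter] at hp
    have := hF₀ hp.1
    simp only [mem_insert, mem_singleton] at this
    rcases this with rfl | rfl
    exacts [hp.2, absurd hp.2 hi₂]
  have hF₁ := subset_pair_of_card_le_two (hF2 i₁) ha₂.2 hb.1 (by rintro rfl; exact hi₂ hb.2)
  have hF₂ := subset_pair_of_card_le_two (hF2 i₂) ha₁i₂ hb.2 (by rintro rfl; exact hi₁ hb.1)
  refine (hbig {a₁, a₂, b} fun i z hz => ?_).not_ge card_le_three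
  by_contra hzS
  have ha₁b : a₁ ≠ b := by rintro rfl; exact hi₁ hb.1
  have ha₂b : a₂ ≠ b := by rintro rfl; exact hi₂ hb.2
  obtain ⟨q₀, hq₀⟩ := hF i i₀
  obtain ⟨q₁, hq₁⟩ := hF i i₁
  obtain ⟨q₂, hq₂⟩ := hF i i₂
  rw [mem_inter] at hq₀ hq₁ hq₂
  have h₀ := hF₀ hq₀.2
  have h₁ := hF₁ hq₁.2
  have h₂ := hF₂ hq₂.2
  simp only [mem_insert, mem_singleton] at hzS h₀ h₁ h₂
  -- Two points of `F i` other than `z` coincide, but no point lies on all three pairs.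
  have hFi := subset_pair_of_card_le_two (hF2 i) hz hq₀.1 (by grind)
  have h₁' := hFi hq₁.1
  have h₂' := hFi hq₂.1
  simp only [mem_insert, mem_singleton] at h₁' h₂'
  grind

section Palette

variable {U V α : Type*} [Fintype V] [DecidableEq α] {c : U → V → α}

def RowsConstOff (c : U → V → α) (a : α) : Prop :=
  ∀ u v v', c u v ≠ a → c u v' ≠ a → c u v = c u v'

theorem rowsConstOff_of_forall_mem_image (hrow : ∀ u, #(univ.image (c u)) ≤ 2) {a : α}
    (ha : ∀ u, a ∈ univ.image (c u)) : RowsConstOff c a := fun u v v' hv hv' => by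
  have := subset_pair_of_card_le_two (hrow u) (mem_image_of_mem _ (mem_univ v)) (ha u) hv
    (mem_image_of_mem _ (mem_univ v'))
  simp only [mem_insert, mem_singleton] at this
  exact (this.resolve_right hv').symm

variable [Fintype U] [Fintype α]

theorem image_inter_image_nonempty (hrow : ∀ u, #(univ.image (c u)) ≤ 2)
    (hcol : ∀ v, #(univ.image (flip c v)) ≤ 2) (hsurj : ∀ i, ∃ u v, c u v = i)
    (hα : 4 < Fintype.card α) (u u' : U) : (univ.image (c u) ∩ univ.image (c u')).Nonempty := by
  by_contra! hdisj
  -- Each column meets rows `u` and `u'` in two distinct colours, which are all it has.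
  have hcover : (univ : Finset α) ⊆ univ.image (c u) ∪ univ.image (c u') := by
    intro i _
    obtain ⟨w, v, rfl⟩ := hsurj i
    have hne : c u v ≠ c u' v := fun h => (eq_empty_iff_forall_notMem.1 hdisj) (c u' v)
      (mem_inter.2 ⟨h ▸ mem_image_of_mem _ (mem_univ v), mem_image_of_mem _ (mem_univ v)⟩)
    have := subset_pair_of_card_le_two (hcol v) (mem_image_of_mem _ (mem_univ u))
      (mem_image_of_mem _ (mem_univ u')) hne (mem_image_of_mem (flip c v) (mem_univ w))
    simp only [mem_insert, mem_singleton, flip] at this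
    rcases this with h | h <;> simp [h]
  have := card_le_card hcover
  have := card_union_le (univ.image (c u)) (univ.image (c u'))
  have := hrow u
  have := hrow u'
  simp only [card_univ] at *
  omega

theorem mem_image_flip_of_forall_mem_image (hrow : ∀ u, #(univ.image (c u)) ≤ 2)
    (hcol : ∀ v, #(univ.image (flip c v)) ≤ 2) (hsurj : ∀ i, ∃ u v, c u v = i)
    (hα : 3 < Fintype.card α) {a : α} (ha : ∀ u, a ∈ univ.image (c u)) (v : V) :
    a ∈ univ.image (flip c v) := by
  by_contra hv
  have hcover : (univ : Finset α) ⊆ insert a (univ.image (flip c v)) := by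
    intro i _
    obtain ⟨u, w, rfl⟩ := hsurj i
    have hne : c u v ≠ a := fun h => hv (h ▸ mem_image_of_mem (flip c v) (mem_univ u))
    have := subset_pair_of_card_le_two (hrow u) (mem_image_of_mem _ (mem_univ v)) (ha u) hne
      (mem_image_of_mem _ (mem_univ w))
    simp only [mem_insert, mem_singleton] at this
    rcases this with h | h <;> simp [h, flip]
  have := card_le_card hcover
  have := card_insert_le a (univ.image (flip c v))
  have := hcol v
  simp only [card_univ] at *
  omega

theorem exists_rowsConstOff_of_card_image_le_two (hrow : ∀ u, #(univ.image (c u)) ≤ 2)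
    (hcol : ∀ v, #(univ.image (flip c v)) ≤ 2) (hsurj : ∀ i, ∃ u v, c u v = i)
    (hα : 4 < Fintype.card α) : ∃ a, RowsConstOff c a ∧ RowsConstOff (flip c) a := by
  obtain ⟨a, ha⟩ := exists_mem_forall_of_pairwise_inter_nonempty (fun u => univ.image (c u)) hrow
    (image_inter_image_nonempty hrow hcol hsurj hα) fun S hS => by
      have : (univ : Finset α) ⊆ S := fun i _ => by
        obtain ⟨u, v, rfl⟩ := hsurj i
        exact hS u (mem_image_of_mem _ (mem_univ v))
      have := card_le_card this
      simp only [card_univ] at this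
      omega
  exact ⟨a, rowsConstOff_of_forall_mem_image hrow ha, rowsConstOff_of_forall_mem_image hcol
    (mem_image_flip_of_forall_mem_image hrow hcol hsurj (by omega) ha)⟩

end Palette

section Counting

variable {U V α : Type*} [Fintype U] [Fintype V] [DecidableEq α]

def rowCount (c : U → V → α) (x : α) : ℕ := #{u | ∃ v, c u v = x}

def rowsMeeting (c : U → V → α) (Y : Finset α) : Finset U := {u | ∃ v, c u v ∈ Y}

theorem one_le_rowCount {c : U → V → α} {x : α} (hx : ∃ u v, c u v = x) : 1 ≤ rowCount c x := by
  obtain ⟨u, v, hv⟩ := hx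
  exact card_pos.2 ⟨u, by simpa using ⟨v, hv⟩⟩

theorem sum_rowCount [DecidableEq U] {c : U → V → α} {a : α} (hc : RowsConstOff c a) {Y : Finset α}
    (haY : a ∉ Y) : ∑ x ∈ Y, rowCount c x = #(rowsMeeting c Y) := by
  unfold rowCount rowsMeeting
  rw [← card_biUnion]
  · congr 1
    ext u
    simp
  · intro x hx y hy hxy
    simp only [Function.onFun]
    rw [Finset.disjoint_left]
    simp only [mem_filter, mem_univ, true_and, not_exists, forall_exists_index]
    rintro u v rfl v' rfl
    exact hxy (hc u v v' (fun h => haY (h ▸ hx)) (fun h => haY (h ▸ hy)))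

end Counting

section Coloring

variable {N : ℕ} {α : Type*} {c : Fin N → Fin N → α} {s t : ℕ}

theorem hasRainbowK13_flip : hasRainbowK13 (flip c) → hasRainbowK13 c := Or.symm

theorem hasMonoKst_flip : hasMonoKst (flip c) s t → hasMonoKst c s t := by
  rintro ⟨i, S, T, hST, h⟩
  exact ⟨i, T, S, hST.symm.imp And.symm And.symm, fun u hu v hv => h v hv u hu⟩

theorem hasMonoKst_of_forall_eq (i : α) {S T : Finset (Fin N)}
    (h : ∀ u ∈ S, ∀ v ∈ T, c u v = i) (hST : s ≤ #S ∧ t ≤ #T ∨ t ≤ #S ∧ s ≤ #T) :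
    hasMonoKst c s t := by
  rcases hST with ⟨hS, hT⟩ | ⟨hS, hT⟩
  all_goals
    obtain ⟨S', hS', hS'c⟩ := exists_subset_card_eq hS
    obtain ⟨T', hT', hT'c⟩ := exists_subset_card_eq hT
    exact ⟨i, S', T', by tauto, fun u hu v hv => h u (hS' hu) v (hT' hv)⟩

variable [DecidableEq α]

theorem card_image_le_two_of_not_hasRainbowK13 (hc : ¬ hasRainbowK13 c) (u : Fin N) :
    #(univ.image (c u)) ≤ 2 := by
  by_contra! h
  obtain ⟨x, y, z, hx, hy, hz, hxy, hxz, hyz⟩ := two_lt_card_iff.1 h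
  simp only [mem_image, mem_univ, true_and] at hx hy hz
  obtain ⟨v₁, rfl⟩ := hx
  obtain ⟨v₂, rfl⟩ := hy
  obtain ⟨v₃, rfl⟩ := hz
  exact hc (Or.inl ⟨u, v₁, v₂, v₃, hxy, hxz, hyz⟩)

/-- The rows meeting `Y` and the columns avoiding `Y` span a block of colour `a`. -/
theorem blockFree_of_not_hasMonoKst {a : α} (hc : RowsConstOff c a) (hc' : RowsConstOff (flip c) a)
    {X : Finset α} (haX : a ∉ X) (hmono : ¬ hasMonoKst c s t) :
    BlockFree X (rowCount c) (rowCount (flip c)) N s t := by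
  intro Y hYX
  have haY : a ∉ Y := fun h => haX (hYX h)
  have hS := sum_rowCount hc haY
  have hT := sum_rowCount hc' haY
  have hN : #(rowsMeeting (flip c) Y) ≤ N := by simpa using card_le_univ (rowsMeeting (flip c) Y)
  have hblock : ∀ u ∈ rowsMeeting c Y, ∀ v ∈ (rowsMeeting (flip c) Y)ᶜ, c u v = a := by
    intro u hu v hv
    simp only [rowsMeeting, mem_compl, mem_filter, mem_univ, true_and, not_exists] at hu hv
    obtain ⟨v', hv'⟩ := hu
    by_contra h
    exact hv u (show c u v ∈ Y from (hc u v v' h fun h' => haY (h' ▸ hv')) ▸ hv')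
  have hT' := card_compl (rowsMeeting (flip c) Y)
  rw [Fintype.card_fin] at hT'
  constructor <;> intro h <;> by_contra! h' <;>
    exact hmono (hasMonoKst_of_forall_eq a hblock (by omega))

end Coloring

theorem hasRainbowK13_or_hasMonoKst {N k s t : ℕ} (c : Fin N → Fin N → Fin k) (hs : 2 ≤ s)
    (hst : s < t) (hN : s + t ≤ N) (hks : s + (t - t / 2) ≤ k) (hk : 4 < k)
    (hsurj : ∀ i, ∃ u v, c u v = i) : hasRainbowK13 c ∨ hasMonoKst c s t := by
  by_contra! ⟨hrb, hmono⟩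
  obtain ⟨a, hc, hc'⟩ := exists_rowsConstOff_of_card_image_le_two
    (card_image_le_two_of_not_hasRainbowK13 hrb)
    (card_image_le_two_of_not_hasRainbowK13 (mt hasRainbowK13_flip hrb)) hsurj (by simpa)
  have haX : a ∉ univ.erase a := notMem_erase a univ
  have hsum : ∀ c' : Fin N → Fin N → Fin k, RowsConstOff c' a →
      ∑ x ∈ univ.erase a, rowCount c' x ≤ N := fun c' hc' => by
    simpa [sum_rowCount hc' haX] using card_le_univ (rowsMeeting c' (univ.erase a))
  refine not_blockFree_and_blockFree hs hst hN (by simp; omega)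
    (fun x _ => one_le_rowCount (hsurj x))
    (fun x _ => one_le_rowCount (by obtain ⟨u, v, h⟩ := hsurj x; exact ⟨v, u, h⟩))
    (hsum c hc) (hsum (flip c) hc')
    ⟨blockFree_of_not_hasMonoKst hc hc' haX hmono,
      blockFree_of_not_hasMonoKst hc' hc haX (mt hasMonoKst_flip hmono)⟩

/-- Colour the diagonal of `K_{N,N}` with the colours `1, …, k - 1` and everything else with `0`. -/
theorem exists_coloring_not_hasRainbowK13_not_hasMonoKst {N k s t : ℕ} (hs : 2 ≤ s) (ht : 2 ≤ t)
    (hN : N < s + t) (hN2 : 2 ≤ N) (hk : 1 < k) (hkN : k ≤ N + 1) :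
    ∃ c : Fin N → Fin N → Fin k,
      (∀ i, ∃ u v, c u v = i) ∧ ¬ hasRainbowK13 c ∧ ¬ hasMonoKst c s t := by
  let z : Fin k := ⟨0, by omega⟩
  let d : Fin N → Fin k := fun u => ⟨min (u + 1) (k - 1), by omega⟩
  have hdz : ∀ u, d u ≠ z := fun u h => by
    simp only [d, z, Fin.ext_iff] at h
    omega
  let c : Fin N → Fin N → Fin k := fun u v => if u = v then d u else z
  refine ⟨c, fun i => ?_, ?_, ?_⟩
  · by_cases hi : (i : ℕ) = 0
    · refine ⟨⟨0, by omega⟩, ⟨1, by omega⟩, ?_⟩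
      simp [c, z, Fin.ext_iff, hi]
    · refine ⟨⟨i - 1, by omega⟩, ⟨i - 1, by omega⟩, ?_⟩
      simp only [c, if_true, d, Fin.ext_iff]
      omega
  · rintro (⟨u, v₁, v₂, v₃, h₁₂, h₁₃, h₂₃⟩ | ⟨v, u₁, u₂, u₃, h₁₂, h₁₃, h₂₃⟩) <;>
      simp only [c] at h₁₂ h₁₃ h₂₃ <;> split_ifs at h₁₂ h₁₃ h₂₃ <;> simp_all
  · rintro ⟨i, S, T, hST, h⟩
    -- `S` and `T` overlap, so `i` is a diagonal colour, which no two rows share in a column.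
    obtain ⟨w, hw⟩ : (S ∩ T).Nonempty := by
      rw [← card_pos]
      have := card_union_add_card_inter S T
      have := card_le_univ (S ∪ T)
      simp only [Fintype.card_fin] at this
      omega
    rw [mem_inter] at hw
    have hiz : i ≠ z := by
      have := h w hw.1 w hw.2
      simp only [c, if_true] at this
      exact this ▸ hdz w
    obtain ⟨u, hu, u', hu', huu'⟩ := one_lt_card.1 (show 1 < #S by omega)
    have hdiag : ∀ x ∈ S, x = w := fun x hx => by
      have := h x hx w hw.2
      simp only [c] at this
      split_ifs at this with hxw
      exacts [hxw, absurd this.symm hiz]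
    exact huu' ((hdiag u hu).trans (hdiag u' hu').symm)

/-- for `2 ≤ s < t`, `t ≥ 5` and `t + s − ⌊t/2⌋ ≤ k ≤ t + s`,
`bgr_k(K_{1,3} : K_{s,t}) = t + s`. -/
theorem stmt16 (k s t : ℕ) (hs : 2 ≤ s) (hst : s < t) (ht : 5 ≤ t)
    (hk1 : t + s - t / 2 ≤ k) (hk2 : k ≤ t + s) :
    bgrK13Kst k s t (t + s) ∧
    (∀ n : ℕ, bgrK13Kst k s t n → t + s ≤ n) := by
  refine ⟨⟨hk2.trans (Nat.le_self_pow two_ne_zero _), fun N hN c hsurj =>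
    hasRainbowK13_or_hasMonoKst c hs hst (by omega) (by omega) (by omega) hsurj⟩, fun n hn => ?_⟩
  by_contra! hn'
  obtain ⟨c, hsurj, hrb, hmono⟩ := exists_coloring_not_hasRainbowK13_not_hasMonoKst
    (N := t + s - 1) (k := k) (t := t) hs (by omega) (by omega) (by omega) (by omega) (by omega)
  exact (hn.2 _ (by omega) c hsurj).elim hrb hmono
end
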